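/- Suppose a dagger category C has, and a dagger functor G : C ⥤ D between dagger categories preserves, dagger intersections and dagger equalizers. Then G has a dagger adjoint if and only if there exist a dagger functor H : D ⥤ C and a natural transformation τ : 𝟭_D ⟹ G ∘ H each of whose components τ_A : A ⟶ G(H A) is weakly G-universal. -/
import Mathlib


open CategoryTheory

universe v u v₁ u₁ v₂ u₂

class DaggerCategory (C : Type u) [Category.{v} C] where
  dag : ∀ {A B : C}, (A ⟶ B) → (B ⟶ A)
  dag_id : ∀ (A : C), dag (𝟙 A) = 𝟙 A
  dag_comp : ∀ {A B X : C} (f : A ⟶ B) (g : B ⟶ X), dag (f ≫ g) = dag g ≫ dag f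
  dag_dag : ∀ {A B : C} (f : A ⟶ B), dag (dag f) = f

postfix:max "†" => DaggerCategory.dag

section Defs

variable {C : Type u} [Category.{v} C] [DaggerCategory C]

/-- A morphism `f` is a partial isometry if `f ∘ f† ∘ f = f`. -/
def IsPartialIsometry {A B : C} (f : A ⟶ B) : Prop :=
  f ≫ f† ≫ f = f

/-- A morphism `f : A ⟶ B` is unitary if `f† ∘ f = 𝟙 A` and `f ∘ f† = 𝟙 B`. -/
def IsUnitary {A B : C} (f : A ⟶ B) : Prop :=
  f ≫ f† = 𝟙 A ∧ f† ≫ f = 𝟙 B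

/-- A morphism `f` is dagger monic (an isometry) if `f† ∘ f = 𝟙`. -/
def DaggerMonic {A B : C} (f : A ⟶ B) : Prop :=
  f ≫ f† = 𝟙 A

/-- `(L, l)` is a limit cone over the diagram `D`. -/
def IsLimitCone {J : Type u₁} [Category.{v₁} J] (D : J ⥤ C) (L : C)
    (l : ∀ j : J, L ⟶ D.obj j) : Prop :=
  (∀ {j j' : J} (f : j ⟶ j'), l j ≫ D.map f = l j') ∧
  (∀ (M : C) (m : ∀ j : J, M ⟶ D.obj j),
    (∀ {j j' : J} (f : j ⟶ j'), m j ≫ D.map f = m j') →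
    ∃! g : M ⟶ L, ∀ j : J, g ≫ l j = m j)

/-- A class of objects `Ω` is weakly initial when every object admits a morphism
from some member of `Ω`. -/
def WeaklyInitial {J : Type u₁} [Category.{v₁} J] (Ω : Set J) : Prop :=
  ∀ B : J, ∃ A ∈ Ω, Nonempty (A ⟶ B)

/-- `(L, l)` is a dagger limit of `(D, Ω)`: a limit cone whose legs at `Ω` are
partial isometries with pairwise commuting induced projections. -/
def IsDaggerLimit {J : Type u₁} [Category.{v₁} J] (D : J ⥤ C) (Ω : Set J) (L : C)
    (l : ∀ j : J, L ⟶ D.obj j) : Prop :=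
  IsLimitCone D L l ∧
  (∀ j ∈ Ω, IsPartialIsometry (l j)) ∧
  (∀ j ∈ Ω, ∀ j' ∈ Ω,
    (l j ≫ (l j)†) ≫ (l j' ≫ (l j')†) = (l j' ≫ (l j')†) ≫ (l j ≫ (l j)†))

end Defs

section MoreDefs

variable {C : Type u} [Category.{v} C] [DaggerCategory C]

/-- `e : E ⟶ A` is an equalizer of the parallel pair `f, g : A ⟶ B`. -/
def IsEqualizer {E A B : C} (e : E ⟶ A) (f g : A ⟶ B) : Prop :=
  e ≫ f = e ≫ g ∧
  ∀ {X : C} (h : X ⟶ A), h ≫ f = h ≫ g → ∃! k : X ⟶ E, k ≫ e = h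

/-- `(P, p, b)` is a wide pullback of the family `m i : A i ⟶ B`. -/
def IsWidePullback {ι : Type u₁} {B : C} {A : ι → C} (m : ∀ i, A i ⟶ B)
    (P : C) (p : ∀ i, P ⟶ A i) (b : P ⟶ B) : Prop :=
  (∀ i, p i ≫ m i = b) ∧
  ∀ {Y : C} (q : ∀ i, Y ⟶ A i) (c : Y ⟶ B), (∀ i, q i ≫ m i = c) →
    ∃! k : Y ⟶ P, (∀ i, k ≫ p i = q i) ∧ k ≫ b = c

end MoreDefs

/-- `C` has dagger equalizers: every parallel pair has an equalizer that is dagger monic. -/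
def HasDaggerEqualizers (C : Type u) [Category.{v} C] [DaggerCategory C] : Prop :=
  ∀ {A B : C} (f g : A ⟶ B), ∃ (E : C) (e : E ⟶ A), IsEqualizer e f g ∧ DaggerMonic e

/-- `C` has dagger intersections: every family of dagger monomorphisms into `B` has a wide
pullback all of whose legs to the `A i` are dagger monic. -/
def HasDaggerIntersections (C : Type u) [Category.{v} C] [DaggerCategory C] : Prop :=
  ∀ (ι : Type v) (B : C) (A : ι → C) (m : ∀ i, A i ⟶ B), (∀ i, DaggerMonic (m i)) →
    ∃ (P : C) (p : ∀ i, P ⟶ A i) (b : P ⟶ B),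
      IsWidePullback m P p b ∧ ∀ i, DaggerMonic (p i)

/-- A dagger functor is a functor between dagger categories preserving the dagger. -/
def IsDaggerFunctor {C : Type u} [Category.{v} C] [DaggerCategory C]
    {D : Type u₂} [Category.{v₂} D] [DaggerCategory D] (F : C ⥤ D) : Prop :=
  ∀ {A B : C} (f : A ⟶ B), F.map (f†) = (F.map f)†

variable {C : Type u} [Category.{v} C] [DaggerCategory C]
variable {D : Type u₂} [Category.{v₂} D] [DaggerCategory D]

/-- `G` preserves dagger equalizers. -/
def PreservesDaggerEqualizers (G : C ⥤ D) : Prop :=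
  ∀ {E A B : C} (f g : A ⟶ B) (e : E ⟶ A), IsEqualizer e f g → DaggerMonic e →
    IsEqualizer (G.map e) (G.map f) (G.map g)

/-- `G` preserves dagger intersections. -/
def PreservesDaggerIntersections (G : C ⥤ D) : Prop :=
  ∀ (ι : Type v) {B : C} {A : ι → C} (m : ∀ i, A i ⟶ B)
    (P : C) (p : ∀ i, P ⟶ A i) (b : P ⟶ B),
    (∀ i, DaggerMonic (m i)) → IsWidePullback m P p b → (∀ i, DaggerMonic (p i)) →
    IsWidePullback (B := G.obj B) (A := fun i => G.obj (A i))
      (fun i => G.map (m i)) (G.obj P) (fun i => G.map (p i)) (G.map b)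

/-- If a dagger category `C` has, and a dagger functor `G : C ⥤ D`
preserves, dagger intersections and dagger equalizers, then `G` has a dagger adjoint iff
there are a dagger functor `H : D ⥤ C` and a natural transformation `τ : 𝟭 D ⟹ H ⋙ G` each
of whose components is weakly `G`-universal. -/
theorem daggerAdjoint_iff (G : C ⥤ D) (hG : IsDaggerFunctor G)
    (hCeq : HasDaggerEqualizers C) (hCint : HasDaggerIntersections C)
    (hGeq : PreservesDaggerEqualizers G) (hGint : PreservesDaggerIntersections G) :
    (∃ F : D ⥤ C, IsDaggerFunctor F ∧ Nonempty (F ⊣ G)) ↔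
    (∃ (H : D ⥤ C) (τ : 𝟭 D ⟶ H ⋙ G), IsDaggerFunctor H ∧
      ∀ (A : D) {Y : C} (f : A ⟶ G.obj Y), ∃ h : H.obj A ⟶ Y, τ.app A ≫ G.map h = f) := by

  constructor
  · rintro ⟨F, hF, ⟨adj⟩⟩
    refine ⟨F, adj.unit, hF, fun A {Y} f => ⟨(adj.homEquiv A Y).symm f, ?_⟩⟩
    have h1 : adj.homEquiv A Y ((adj.homEquiv A Y).symm f) = f :=
      (adj.homEquiv A Y).apply_symm_apply f
    rw [Adjunction.homEquiv_unit] at h1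
    exact h1
  · rintro ⟨H, τ, hH, hweak⟩
    -- For each `A`, construct a universal arrow `σ A : A ⟶ G.obj (P A)` together with
    -- a dagger monic `b A : P A ⟶ H.obj A` such that `σ A ≫ G.map (b A) = τ.app A`.
    have main : ∀ A : D, ∃ (P : C) (bb : P ⟶ H.obj A) (σ : A ⟶ G.obj P),
        DaggerMonic bb ∧ σ ≫ G.map bb = τ.app A ∧
        ∀ (Y : C) (h k : P ⟶ Y), σ ≫ G.map h = σ ≫ G.map k → h = k := by
      intro A
      -- index type: endomorphisms of `H.obj A` fixing `τ.app A`
      let S := {t : H.obj A ⟶ H.obj A // τ.app A ≫ G.map t = τ.app A}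
      choose E e heq hdm using fun t : S => hCeq t.1 (𝟙 (H.obj A))
      obtain ⟨P, p, bb, hwp, hpdm⟩ := hCint S (H.obj A) E e hdm
      have t1 : S := ⟨𝟙 (H.obj A), by simp⟩
      have hbdm : DaggerMonic bb := by
        have h1 : p t1 ≫ e t1 = bb := hwp.1 t1
        unfold DaggerMonic
        rw [← h1, DaggerCategory.dag_comp, Category.assoc, ← Category.assoc (e t1),
          hdm t1, Category.id_comp, hpdm t1]
      -- factorization of `τ.app A` through the preserved intersection
      have hGwp := hGint S e P p bb hdm hwp hpdm
      choose s hs using fun t : S =>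
        ((hGeq t.1 (𝟙 (H.obj A)) (e t) (heq t) (hdm t)).2 (τ.app A)
          (by rw [G.map_id, Category.comp_id, t.2])).exists
      obtain ⟨σ, ⟨-, hσb⟩, -⟩ := hGwp.2 s (τ.app A) hs
      refine ⟨P, bb, σ, hbdm, hσb, ?_⟩
      -- uniqueness
      intro Y h k hhk
      obtain ⟨Q, q, hq, hqdm⟩ := hCeq h k
      have hGq := hGeq h k q hq hqdm
      obtain ⟨s0, hs0⟩ := (hGq.2 σ hhk).exists
      obtain ⟨r, hr⟩ := hweak A s0
      have ht0 : τ.app A ≫ G.map (r ≫ q ≫ bb) = τ.app A := by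
        rw [G.map_comp, G.map_comp, reassoc_of% hr, reassoc_of% hs0, hσb]
      have hbb : bb ≫ bb† = 𝟙 P := hbdm
      have hbt : bb ≫ r ≫ q ≫ bb = bb := by
        have h1 : p ⟨r ≫ q ≫ bb, ht0⟩ ≫ e ⟨r ≫ q ≫ bb, ht0⟩ = bb := hwp.1 _
        have h2 : e ⟨r ≫ q ≫ bb, ht0⟩ ≫ (r ≫ q ≫ bb) = e ⟨r ≫ q ≫ bb, ht0⟩ := by
          have h3 := (heq ⟨r ≫ q ≫ bb, ht0⟩).1
          rwa [Category.comp_id] at h3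
        nth_rewrite 1 [← h1]
        rw [Category.assoc, h2, h1]
      have hcancel : ∀ {Z : C} (u v : Z ⟶ P), u ≫ bb = v ≫ bb → u = v := by
        intro Z u v huv
        have h5 : (u ≫ bb) ≫ bb† = (v ≫ bb) ≫ bb† := by rw [huv]
        simp only [Category.assoc, hbb, Category.comp_id] at h5
        exact h5
      have hsplit : (bb ≫ r) ≫ q = 𝟙 P := by
        apply hcancel
        simp only [Category.assoc, Category.id_comp]
        exact hbt
      calc h = ((bb ≫ r) ≫ q) ≫ h := by rw [hsplit, Category.id_comp]
        _ = ((bb ≫ r) ≫ q) ≫ k := by simp only [Category.assoc, hq.1]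
        _ = k := by rw [hsplit, Category.id_comp]
    choose P bb σ hbdm hσb huniq using main
    -- the key computation for naturality
    have hGdm : ∀ {A : D}, G.map (bb A) ≫ G.map ((bb A)†) = 𝟙 (G.obj (P A)) := by
      intro A
      rw [← G.map_comp, hbdm A, G.map_id]
    have key : ∀ {A B : D} (f : A ⟶ B),
        σ A ≫ G.map (bb A ≫ H.map f ≫ (bb B)†) = f ≫ σ B := by
      intro A B f
      have hnat := τ.naturality f
      simp only [Functor.id_obj, Functor.id_map, Functor.comp_obj, Functor.comp_map] at hnat
      rw [G.map_comp, G.map_comp, reassoc_of% (hσb A), ← reassoc_of% hnat, ← hσb B]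
      simp only [Category.assoc, hGdm, Category.comp_id]
    let F : D ⥤ C :=
      { obj := P
        map := fun {A B} f => bb A ≫ H.map f ≫ (bb B)†
        map_id := fun A => by
          apply huniq
          rw [key (𝟙 A), G.map_id, Category.comp_id, Category.id_comp]
        map_comp := fun {A B X} f g => by
          apply huniq
          rw [key (f ≫ g), G.map_comp, reassoc_of% (key f), key g, Category.assoc] }
    refine ⟨F, ?_, ⟨Adjunction.mkOfHomEquiv ?_⟩⟩
    · intro A B f
      show bb B ≫ H.map (f†) ≫ (bb A)† = (bb A ≫ H.map f ≫ (bb B)†)†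
      rw [hH f, DaggerCategory.dag_comp, DaggerCategory.dag_comp, DaggerCategory.dag_dag,
        Category.assoc]
    · refine
        { homEquiv := fun A Y =>
            { toFun := fun h => σ A ≫ G.map h
              invFun := fun f => bb A ≫ (hweak A f).choose
              left_inv := ?_
              right_inv := ?_ }
          homEquiv_naturality_left_symm := ?_
          homEquiv_naturality_right := ?_ }
      · intro h
        apply huniq
        show σ A ≫ G.map (bb A ≫ (hweak A (σ A ≫ G.map h)).choose) = σ A ≫ G.map h
        rw [G.map_comp, reassoc_of% (hσb A), (hweak A (σ A ≫ G.map h)).choose_spec]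
      · intro f
        show σ A ≫ G.map (bb A ≫ (hweak A f).choose) = f
        rw [G.map_comp, reassoc_of% (hσb A), (hweak A f).choose_spec]
      · intro A' A Y f g
        apply huniq
        show σ A' ≫ G.map (bb A' ≫ (hweak A' (f ≫ g)).choose) =
          σ A' ≫ G.map ((bb A' ≫ H.map f ≫ (bb A)†) ≫ bb A ≫ (hweak A g).choose)
        rw [G.map_comp, reassoc_of% (hσb A'), (hweak A' (f ≫ g)).choose_spec,
          G.map_comp, ← Category.assoc, key f, Category.assoc, G.map_comp,
          reassoc_of% (hσb A), (hweak A g).choose_spec]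
      · intro A Y Y' f g
        show σ A ≫ G.map (f ≫ g) = (σ A ≫ G.map f) ≫ G.map g
        rw [G.map_comp, Category.assoc]
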